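/- (Dual transport equation: exponential decay of the a-derivative.) Let μ > 0, R > 1, T > 0, and let r be an admissible fusion kernel with exponent μ; set r̄_ε(a,v) := r(a,v)/(1 + ε^{2μ+2} a^μ). Let χ ∈ C¹_b(S) vanish whenever v ∉ [1/R, R] and whenever a ≤ c₀ v^{2/3} + δ₁ for some δ₁ > 0, and assume ‖χ‖_∞ + ‖∂_a χ‖_∞ ≤ 1. Let φ_ε solve ∂_t φ_ε + (1/ε) r̄_ε(a,v)(c₀ v^{2/3} − a) ∂_a φ_ε = 0 with φ_ε(T,·) = χ. Then, for all ε sufficiently small, there exists a constant C > 0, independent of ε (but possibly depending on R), such that ‖∂_a φ_ε(t)‖_∞ ≤ e^{−C(T−t)/ε} for every t ∈ [0,T]. -/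

import Mathlib

open MeasureTheory Real Set Filter Topology
open scoped ENNReal

noncomputable section

/-- `c₀ = (36π)^(1/3)`, the isoperimetric constant relating area and volume of a ball. -/
def c0 : ℝ := (36 * Real.pi) ^ ((1 : ℝ) / 3)

/-- The open quadrant `(0,∞)²` of pairs `(a,v)` (surface area, volume). -/
def Quad : Set (ℝ × ℝ) := {p | 0 < p.1 ∧ 0 < p.2}

/-- The isoperimetric region `{(a,v) : v > 0, a ≥ c₀ v^(2/3)}`. -/
def IsoRegion : Set (ℝ × ℝ) := {p | 0 < p.2 ∧ c0 * p.2 ^ ((2 : ℝ) / 3) ≤ p.1}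

/-- A nonnegative (Radon) measure on `(0,∞)²` supported in `{a ≥ c₀ v^(2/3)}`:
it gives zero mass to the complement of the isoperimetric region. -/
def IsIsoMeasure (m : Measure (ℝ × ℝ)) : Prop := m IsoRegionᶜ = 0

/-- `C₀((0,∞)²)`: continuous functions vanishing at infinity of the open quadrant
(extended by zero outside the quadrant). -/
def IsC0Quad (φ : ℝ × ℝ → ℝ) : Prop :=
  Continuous φ ∧ (∀ p, p ∉ Quad → φ p = 0) ∧
    ∀ δ > 0, ∃ Kc : Set (ℝ × ℝ), IsCompact Kc ∧ Kc ⊆ Quad ∧ ∀ p ∉ Kc, |φ p| ≤ δ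

/-- `C_c((0,∞)²)`: continuous functions with compact support contained in the quadrant. -/
def IsCcQuad (φ : ℝ × ℝ → ℝ) : Prop :=
  Continuous φ ∧ HasCompactSupport φ ∧ tsupport φ ⊆ Quad

/-- `C₀((0,∞))`: continuous functions on `(0,∞)` vanishing at infinity (extended by zero). -/
def IsC0Pos (φ : ℝ → ℝ) : Prop :=
  Continuous φ ∧ (∀ v, v ∉ Ioi (0 : ℝ) → φ v = 0) ∧
    ∀ δ > 0, ∃ Kc : Set ℝ, IsCompact Kc ∧ Kc ⊆ Ioi (0 : ℝ) ∧ ∀ v ∉ Kc, |φ v| ≤ δ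

/-- `C_c((0,∞))`: continuous functions with compact support contained in `(0,∞)`. -/
def IsCcPos (φ : ℝ → ℝ) : Prop :=
  Continuous φ ∧ HasCompactSupport φ ∧ tsupport φ ⊆ Ioi (0 : ℝ)

/-- Partial derivative in the area variable `a`. -/
def da (φ : ℝ × ℝ → ℝ) (p : ℝ × ℝ) : ℝ := deriv (fun a => φ (a, p.2)) p.1

/-- Time-dependent test functions `φ ∈ C¹_c([0,∞); C¹_c((0,∞)²))`. -/
def IsTestFun (ψ : ℝ × (ℝ × ℝ) → ℝ) : Prop :=
  ContDiff ℝ 1 ψ ∧ HasCompactSupport ψ ∧ ∀ q : ℝ × (ℝ × ℝ), q.2 ∉ Quad → ψ q = 0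

/-- The assumptions on the coagulation kernel `K`: continuity, symmetry, and the
two-sided power law bounds with constants `K₀ ≥ K₁ > 0` and exponents
`al > 0`, `be ∈ (0,1)`, `be - al ∈ (0,1)`. -/
structure IsCoagKernel (K : ℝ × ℝ → ℝ × ℝ → ℝ) (K₀ K₁ al be : ℝ) : Prop where
  cont : ContinuousOn (fun q : (ℝ × ℝ) × (ℝ × ℝ) => K q.1 q.2) (Quad ×ˢ Quad)
  symm : ∀ η η', K η η' = K η' η
  K1_pos : 0 < K₁
  K1_le_K0 : K₁ ≤ K₀
  al_pos : 0 < al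
  be_mem : be ∈ Ioo (0 : ℝ) 1
  be_sub_al_mem : be - al ∈ Ioo (0 : ℝ) 1
  lower : ∀ η ∈ Quad, ∀ η' ∈ Quad,
    K₁ * (η.2 ^ (-al) * η'.2 ^ be + η'.2 ^ (-al) * η.2 ^ be) ≤ K η η'
  upper : ∀ η ∈ Quad, ∀ η' ∈ Quad,
    K η η' ≤ K₀ * (η.2 ^ (-al) * η'.2 ^ be + η'.2 ^ (-al) * η.2 ^ be)

/-- The assumptions on an admissible fusion kernel `r`: positivity, `C¹` regularity,
two-sided power law bounds `R₀ a^mu v^sg ≤ r ≤ R₁ a^mu v^sg`, and the structural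
differential inequalities on the isoperimetric region. -/
structure IsFusionKernel (r : ℝ × ℝ → ℝ) (R₀ R₁ mu sg B : ℝ) : Prop where
  smooth : ContDiffOn ℝ 1 r Quad
  pos : ∀ η ∈ Quad, 0 < r η
  R0_pos : 0 < R₀
  R1_pos : 0 < R₁
  B_pos : 0 < B
  lower : ∀ η ∈ Quad, R₀ * η.1 ^ mu * η.2 ^ sg ≤ r η
  upper : ∀ η ∈ Quad, r η ≤ R₁ * η.1 ^ mu * η.2 ^ sg
  cond_pos : 0 < mu → ∀ η ∈ IsoRegion, 0 ≤ da r η - mu * η.1⁻¹ * r η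
  cond_nonpos : mu ≤ 0 → ∀ η ∈ IsoRegion,
    0 ≤ da r η * (η.1 - c0 * η.2 ^ ((2 : ℝ) / 3)) + r η
  cond_upper : ∀ η ∈ IsoRegion, da r η ≤ B * η.1⁻¹ * r η

/-- The weak identity at time `t` against the test function `ψ`, for the
fusion–coagulation equation with fusion coefficient `c` (the `Λ`-fusion problem
corresponds to `c = Λ⁻¹`). -/
def WeakIdentity (K : ℝ × ℝ → ℝ × ℝ → ℝ) (r : ℝ × ℝ → ℝ) (c : ℝ)
    (fin : Measure (ℝ × ℝ)) (f : ℝ → Measure (ℝ × ℝ))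
    (ψ : ℝ × (ℝ × ℝ) → ℝ) (t : ℝ) : Prop :=
  (∫ η, ψ (t, η) ∂(f t)) - (∫ η, ψ (0, η) ∂fin)
      - ∫ s in (0 : ℝ)..t, ∫ η, deriv (fun u => ψ (u, η)) s ∂(f s)
    = (∫ s in (0 : ℝ)..t, (1 / 2) *
        ∫ η, ∫ η', K η η' * (ψ (s, η + η') - ψ (s, η) - ψ (s, η')) ∂(f s) ∂(f s))
      + c * ∫ s in (0 : ℝ)..t,
          ∫ η, r η * (c0 * η.2 ^ ((2 : ℝ) / 3) - η.1) * da (fun p => ψ (s, p)) η ∂(f s)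

/-- A weak solution of the fusion–coagulation problem with fusion coefficient `c`
(power-law exponents `al`, `be` of the coagulation kernel enter the a priori moment
bound), initial datum `fin`: a weak-* continuous family of measures supported in the
isoperimetric region, with locally uniformly bounded `(v^(-al) + v^be)`-moments,
satisfying the weak identity for all test functions and times. -/
def IsWeakSolution (K : ℝ × ℝ → ℝ × ℝ → ℝ) (r : ℝ × ℝ → ℝ) (c al be : ℝ)
    (fin : Measure (ℝ × ℝ)) (f : ℝ → Measure (ℝ × ℝ)) : Prop :=
  (∀ t, 0 ≤ t → IsIsoMeasure (f t)) ∧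
  (∀ φ, IsC0Quad φ → ContinuousOn (fun t => ∫ η, φ η ∂(f t)) (Ici (0 : ℝ))) ∧
  (∀ T > (0 : ℝ), ∃ C : ℝ≥0∞, C ≠ ⊤ ∧ ∀ t ∈ Icc (0 : ℝ) T,
      (∫⁻ η, ENNReal.ofReal (η.2 ^ (-al) + η.2 ^ be) ∂(f t)) ≤ C) ∧
  (∀ ψ, IsTestFun ψ → ∀ t, 0 ≤ t → WeakIdentity K r c fin f ψ t)

/-- The regularized fusion kernel `r̄_ε(a,v) = r(a,v)/(1 + ε^(2μ+2) a^μ)`. -/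
def rbarFn (r : ℝ × ℝ → ℝ) (mu ε : ℝ) (η : ℝ × ℝ) : ℝ :=
  r η / (1 + ε ^ (2 * mu + 2) * η.1 ^ mu)

end

/-!
Along the characteristics `ȧ = ε⁻¹ r̄_ε(a,v) (c₀v^{2/3} - a)` at fixed volume `v` the solution
`φ_ε` is constant, so `φ_ε(t, ·, v)` is `χ(·, v)` composed with the time-`(T - t)` flow. The
flow moves towards the boundary `a = c₀v^{2/3}` and is one-sidedly contracting: the speed is
`-ε⁻¹ r̄_ε(a,v) (a - c₀v^{2/3})` with `r̄_ε` nondecreasing in `a` (this is where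
`∂ₐr ≥ μ a⁻¹ r` enters) and bounded below by some `C(R) > 0` uniformly in `ε ≤ 1` and
`v ∈ [1/R, R]`. Hence characteristics approach each other like `e^{-C(T-t)/ε}`, which bounds
the Lipschitz constant of `φ_ε(t, ·, v)` and therefore `∂ₐφ_ε`.
-/

open scoped NNReal

section ScalarODE

variable {t T : ℝ}

theorem exists_forall_hasDerivWithinAt_Icc_of_lipschitzWith {G : ℝ → ℝ} {K : ℝ≥0} {C : ℝ}
    (hG : LipschitzWith K G) (hGC : ∀ x, |G x| ≤ C) (htT : t ≤ T) (x₀ : ℝ) :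
    ∃ A : ℝ → ℝ, A t = x₀ ∧ ∀ s ∈ Icc t T, HasDerivWithinAt A (G (A s)) (Icc t T) s := by
  have hC : 0 ≤ C := (abs_nonneg _).trans (hGC 0)
  have hpl : IsPicardLindelof (fun _ => G) (tmin := t) (tmax := T) ⟨t, le_rfl, htT⟩ x₀
      ⟨C * (T - t), mul_nonneg hC (sub_nonneg.2 htT)⟩ 0 ⟨C, hC⟩ K :=
    .of_time_independent (fun x _ => hGC x) hG.lipschitzOnWith (by
      simp [max_eq_left (sub_nonneg.2 htT)]; rfl)
  exact hpl.exists_eq_forall_mem_Icc_hasDerivWithinAt₀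

theorem ne_of_hasDerivWithinAt_of_lipschitzWith {G A : ℝ → ℝ} {K : ℝ≥0} {β : ℝ}
    (hG : LipschitzWith K G) (hβ : G β = 0)
    (hA : ∀ s ∈ Icc t T, HasDerivWithinAt A (G (A s)) (Icc t T) s) (ht : A t ≠ β) :
    ∀ s ∈ Icc t T, A s ≠ β := by
  intro s hs hAs
  refine ht (ODE_solution_unique_of_mem_Icc_left (v := fun _ => G) (s := fun _ => univ)
    (g := fun _ => β) (fun _ _ => hG.lipschitzOnWith)
    (fun u hu => (hA u ⟨hu.1, hu.2.trans hs.2⟩).continuousWithinAt.mono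
      (Icc_subset_Icc_right hs.2))
    (fun u hu => (hA u ⟨hu.1.le, hu.2.trans hs.2⟩).mono_of_mem_nhdsWithin
      (Icc_mem_nhdsLE_of_mem ⟨hu.1, hu.2.trans hs.2⟩))
    (fun _ _ => mem_univ _) continuousOn_const
    (fun u _ => by simpa [hβ] using hasDerivWithinAt_const u (Iic u) β)
    (fun _ _ => mem_univ _) hAs ⟨le_rfl, hs.1⟩)

theorem exists_solution_mem_Ioc {F : ℝ → ℝ} {β M : ℝ} {L : ℝ≥0} (hβM : β ≤ M)
    (hF : LipschitzOnWith L F (Icc β M)) (hFβ : F β = 0) (hF0 : ∀ x ∈ Icc β M, F x ≤ 0)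
    (htT : t ≤ T) {a₀ : ℝ} (ha₀ : a₀ ∈ Ioc β M) :
    ∃ A : ℝ → ℝ, A t = a₀ ∧ ContinuousOn A (Icc t T) ∧ (∀ s ∈ Icc t T, A s ∈ Ioc β a₀) ∧
      ∀ s ∈ Ioo t T, HasDerivAt A (F (A s)) s := by
  set G : ℝ → ℝ := fun x => F (projIcc β M hβM x) with hGdef
  have hG : LipschitzWith (L * 1) G := hF.to_restrict.comp (LipschitzWith.projIcc hβM)
  have hGβ : G β = 0 := by simp [hGdef, hFβ]
  have hGC : ∀ x, |G x| ≤ L * (M - β) := fun x => by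
    have := hF.dist_le_mul _ (projIcc β M hβM x).2 _ (left_mem_Icc.2 hβM)
    rw [hFβ, Real.dist_eq, sub_zero, Real.dist_eq] at this
    refine this.trans (mul_le_mul_of_nonneg_left ?_ L.2)
    have := (projIcc β M hβM x).2
    rw [abs_of_nonneg (by linarith [this.1])]
    linarith [this.2]
  obtain ⟨A, hA₀, hA⟩ := exists_forall_hasDerivWithinAt_Icc_of_lipschitzWith hG hGC htT a₀
  have hAc : ContinuousOn A (Icc t T) := fun s hs => (hA s hs).continuousWithinAt
  have hne := ne_of_hasDerivWithinAt_of_lipschitzWith hG hGβ hA (hA₀ ▸ ha₀.1.ne')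
  have hanti : AntitoneOn A (Icc t T) := by
    refine antitoneOn_of_hasDerivWithinAt_nonpos (convex_Icc t T) hAc
      (fun s hs => (hA s (interior_subset hs)).mono interior_subset) fun s _ => ?_
    exact hF0 _ (projIcc β M hβM (A s)).2
  have hmem : ∀ s ∈ Icc t T, A s ∈ Ioc β a₀ := by
    intro s hs
    have hle : A s ≤ a₀ := hA₀ ▸ hanti ⟨le_rfl, htT⟩ hs hs.1
    refine ⟨lt_of_not_ge fun hAs => ?_, hle⟩
    obtain ⟨u, hu, hAu⟩ := intermediate_value_Icc' hs.1 (hAc.mono (Icc_subset_Icc_right hs.2))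
      ⟨hAs, hA₀ ▸ ha₀.1.le⟩
    exact hne u ⟨hu.1, hu.2.trans hs.2⟩ hAu
  refine ⟨A, hA₀, hAc, hmem, fun s hs => ?_⟩
  have hs' := Ioo_subset_Icc_self hs
  have hAs : A s ∈ Icc β M := ⟨(hmem s hs').1.le, (hmem s hs').2.trans ha₀.2⟩
  simpa [hGdef, projIcc_of_mem hβM hAs] using (hA s hs').hasDerivAt (Icc_mem_nhds hs.1 hs.2)

theorem abs_sub_le_exp_mul_of_oneSided {F A₁ A₂ : ℝ → ℝ} {S : Set ℝ} {c : ℝ}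
    (hF : ∀ x ∈ S, ∀ y ∈ S, (x - y) * (F x - F y) ≤ -c * (x - y) ^ 2) (htT : t ≤ T)
    (h₁c : ContinuousOn A₁ (Icc t T)) (h₂c : ContinuousOn A₂ (Icc t T))
    (h₁ : ∀ s ∈ Ioo t T, HasDerivAt A₁ (F (A₁ s)) s)
    (h₂ : ∀ s ∈ Ioo t T, HasDerivAt A₂ (F (A₂ s)) s)
    (h₁S : ∀ s ∈ Ioo t T, A₁ s ∈ S) (h₂S : ∀ s ∈ Ioo t T, A₂ s ∈ S) :
    |A₁ T - A₂ T| ≤ exp (-(c * (T - t))) * |A₁ t - A₂ t| := by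
  set D : ℝ → ℝ := fun s => A₁ s - A₂ s
  have hw : AntitoneOn (fun s => exp (2 * c * s) * D s ^ 2) (Icc t T) := by
    refine antitoneOn_of_hasDerivWithinAt_nonpos (convex_Icc t T)
      (f' := fun s => exp (2 * c * s) * (2 * c * 1) * D s ^ 2 +
        exp (2 * c * s) * (2 * D s ^ 1 * (F (A₁ s) - F (A₂ s))))
      (by fun_prop) (fun s hs => ?_) (fun s hs => ?_) <;> rw [interior_Icc] at hs
    · exact (((hasDerivAt_id s).const_mul (2 * c)).exp.mul
        (((h₁ s hs).sub (h₂ s hs)).pow 2)).hasDerivWithinAt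
    · have := hF _ (h₁S s hs) _ (h₂S s hs)
      have hexp := exp_pos (2 * c * s)
      simp only [pow_one]
      nlinarith
  have hT := hw ⟨le_rfl, htT⟩ ⟨htT, le_rfl⟩ htT
  refine abs_le_of_sq_le_sq ?_ (by positivity)
  calc D T ^ 2 = exp (-(2 * c * T)) * (exp (2 * c * T) * D T ^ 2) := by
        rw [← mul_assoc, ← exp_add, neg_add_cancel, exp_zero, one_mul]
    _ ≤ exp (-(2 * c * T)) * (exp (2 * c * t) * D t ^ 2) := by gcongr
    _ = (exp (-(c * (T - t))) * |D t|) ^ 2 := by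
        rw [mul_pow, sq_abs, ← exp_nat_mul, ← mul_assoc, ← exp_add]
        congr 2
        push_cast
        ring

end ScalarODE

section Transport

variable {t T : ℝ}

theorem hasDerivAt_comp_characteristic {f : ℝ × ℝ → ℝ} {F A : ℝ → ℝ} {s : ℝ}
    (hf : DifferentiableAt ℝ f (s, A s)) (hA : HasDerivAt A (F (A s)) s)
    (hpde : deriv (fun u => f (u, A s)) s + F (A s) * deriv (fun x => f (s, x)) (A s) = 0) :
    HasDerivAt (fun u => f (u, A u)) 0 s := by
  have hf' := hf.hasFDerivAt
  have hu : HasDerivAt (fun u => f (u, A s)) (fderiv ℝ f (s, A s) (1, 0)) s :=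
    hf'.comp_hasDerivAt s ((hasDerivAt_id s).prodMk (hasDerivAt_const s _))
  have hx : HasDerivAt (fun x => f (s, x)) (fderiv ℝ f (s, A s) (0, 1)) (A s) :=
    hf'.comp_hasDerivAt (A s) ((hasDerivAt_const _ s).prodMk (hasDerivAt_id _))
  have hvec : ((1 : ℝ), F (A s)) = (1, 0) + F (A s) • (0, 1) := by simp
  rw [hu.deriv, hx.deriv, ← smul_eq_mul, ← map_smul, ← map_add, ← hvec] at hpde
  have h := hf'.comp_hasDerivAt s ((hasDerivAt_id s).prodMk hA)
  rw [hpde] at h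
  exact h

theorem eq_of_characteristic {f : ℝ × ℝ → ℝ} {F A : ℝ → ℝ} (htT : t ≤ T)
    (hc : ContinuousOn (fun u => f (u, A u)) (Icc t T))
    (hf : ∀ s ∈ Ioo t T, DifferentiableAt ℝ f (s, A s))
    (hA : ∀ s ∈ Ioo t T, HasDerivAt A (F (A s)) s)
    (hpde : ∀ s ∈ Ioo t T,
      deriv (fun u => f (u, A s)) s + F (A s) * deriv (fun x => f (s, x)) (A s) = 0) :
    f (t, A t) = f (T, A T) := by
  rcases htT.eq_or_lt with rfl | htT
  · rfl
  obtain ⟨s, -, hs⟩ := exists_hasDerivAt_eq_slope (fun u => f (u, A u)) (fun _ => 0) htT hc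
    fun s hs => hasDerivAt_comp_characteristic (hf s hs) (hA s hs) (hpde s hs)
  rw [eq_comm, div_eq_zero_iff, sub_eq_zero, sub_eq_zero] at hs
  exact hs.resolve_right htT.ne' |>.symm

theorem abs_sub_le_exp_mul_of_transport {f : ℝ × ℝ → ℝ} {F : ℝ → ℝ} {β c : ℝ}
    (hF : ContDiffOn ℝ 1 F (Ici β)) (hFβ : F β = 0) (hF0 : ∀ x ∈ Ici β, F x ≤ 0)
    (hFc : ∀ x ∈ Ici β, ∀ y ∈ Ici β, (x - y) * (F x - F y) ≤ -c * (x - y) ^ 2)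
    (hf : ContDiffOn ℝ 1 f (Icc 0 T ×ˢ Ici β))
    (hpde : ∀ s ∈ Ioo 0 T, ∀ x ∈ Ioi β,
      deriv (fun u => f (u, x)) s + F x * deriv (fun y => f (s, y)) x = 0)
    (hfT : ∀ x ∈ Ioi β, ∀ y ∈ Ioi β, |f (T, x) - f (T, y)| ≤ |x - y|)
    (ht : t ∈ Icc 0 T) {x y : ℝ} (hx : x ∈ Ioi β) (hy : y ∈ Ioi β) :
    |f (t, x) - f (t, y)| ≤ exp (-(c * (T - t))) * |x - y| := by
  set M := max x y
  have hβM : β ≤ M := hx.out.le.trans (le_max_left x y)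
  obtain ⟨L, hL⟩ := (hF.mono Icc_subset_Ici_self).exists_lipschitzOnWith one_ne_zero
    (convex_Icc β M) isCompact_Icc
  have hF0' : ∀ z ∈ Icc β M, F z ≤ 0 := fun z hz => hF0 z hz.1
  have flow (a₀ : ℝ) (ha₀ : a₀ ∈ Ioc β M) : ∃ A : ℝ → ℝ, A t = a₀ ∧ ContinuousOn A (Icc t T) ∧
      (∀ s ∈ Icc t T, A s ∈ Ioi β) ∧ (∀ s ∈ Ioo t T, HasDerivAt A (F (A s)) s) ∧
      f (t, a₀) = f (T, A T) := by
    obtain ⟨A, hA₀, hAc, hAmem, hA⟩ := exists_solution_mem_Ioc hβM hL hFβ hF0' ht.2 ha₀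
    have hIoo (s : ℝ) (hs : s ∈ Ioo t T) : s ∈ Ioo 0 T := ⟨ht.1.trans_lt hs.1, hs.2⟩
    refine ⟨A, hA₀, hAc, fun s hs => (hAmem s hs).1, hA, ?_⟩
    rw [← hA₀]
    refine eq_of_characteristic ht.2 ?_ (fun s hs => ?_) hA
      (fun s hs => hpde s (hIoo s hs) _ (hAmem s (Ioo_subset_Icc_self hs)).1)
    · exact hf.continuousOn.comp (continuousOn_id.prodMk hAc) fun s hs =>
        ⟨⟨ht.1.trans hs.1, hs.2⟩, (hAmem s hs).1.le⟩
    · have hmem : Icc 0 T ×ˢ Ici β ∈ 𝓝 (s, A s) :=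
        prod_mem_nhds (Icc_mem_nhds (hIoo s hs).1 hs.2)
          (Ici_mem_nhds (hAmem s (Ioo_subset_Icc_self hs)).1)
      exact (hf.contDiffAt hmem).differentiableAt one_ne_zero
  obtain ⟨A₁, hA₁t, hA₁c, hA₁β, hA₁, hfx⟩ := flow x ⟨hx, le_max_left x y⟩
  obtain ⟨A₂, hA₂t, hA₂c, hA₂β, hA₂, hfy⟩ := flow y ⟨hy, le_max_right x y⟩
  have hT : T ∈ Icc t T := ⟨ht.2, le_rfl⟩
  rw [hfx, hfy]
  calc |f (T, A₁ T) - f (T, A₂ T)| ≤ |A₁ T - A₂ T| := hfT _ (hA₁β T hT) _ (hA₂β T hT)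
    _ ≤ exp (-(c * (T - t))) * |x - y| := by
      simpa [hA₁t, hA₂t] using abs_sub_le_exp_mul_of_oneSided hFc ht.2 hA₁c hA₂c hA₁ hA₂
        (fun s hs => (hA₁β s (Ioo_subset_Icc_self hs)).out.le)
        (fun s hs => (hA₂β s (Ioo_subset_Icc_self hs)).out.le)

end Transport

theorem abs_sub_le_of_continuousOn_Ici {f : ℝ → ℝ} {β K : ℝ} (hf : ContinuousOn f (Ici β))
    (hK : ∀ x ∈ Ioi β, ∀ y ∈ Ioi β, |f x - f y| ≤ K * |x - y|) :
    ∀ x ∈ Ici β, ∀ y ∈ Ici β, |f x - f y| ≤ K * |x - y| := by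
  have hlim (z : ℝ) (hz : z ∈ Ici β) : Tendsto (fun δ => f (z + δ)) (𝓝[>] 0) (𝓝 (f z)) := by
    refine (hf z hz).tendsto.comp (tendsto_nhdsWithin_iff.2 ⟨?_, ?_⟩)
    · exact ((continuous_const.add continuous_id).tendsto' 0 z (add_zero z)).mono_left
        nhdsWithin_le_nhds
    · filter_upwards [self_mem_nhdsWithin] with δ (hδ : 0 < δ)
      exact (le_add_of_nonneg_right hδ.le).trans' hz
  intro x hx y hy
  refine le_of_tendsto ((hlim x hx).sub (hlim y hy)).abs ?_
  filter_upwards [self_mem_nhdsWithin] with δ (hδ : 0 < δ)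
  simpa using hK (x + δ) (lt_add_of_le_of_pos hx hδ) (y + δ) (lt_add_of_le_of_pos hy hδ)

theorem abs_deriv_le_of_abs_sub_le {f : ℝ → ℝ} {a K : ℝ} (hK0 : 0 ≤ K)
    (hK : ∀ x ∈ Ici a, |f x - f a| ≤ K * |x - a|) : |deriv f a| ≤ K := by
  by_cases hd : DifferentiableAt ℝ f a
  · have hslope := (hasDerivAt_iff_tendsto_slope.mp hd.hasDerivAt).mono_left
      (nhdsWithin_mono a (show Ioi a ⊆ {a}ᶜ from fun _ hx => hx.out.ne'))
    refine le_of_tendsto hslope.abs ?_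
    filter_upwards [self_mem_nhdsWithin] with x (hx : a < x)
    rw [slope_def_field, abs_div, div_le_iff₀ (abs_pos.2 (sub_ne_zero.2 hx.ne'))]
    exact hK x hx.le
  · rw [deriv_zero_of_not_differentiableAt hd, abs_zero]
    exact hK0

theorem monotoneOn_div_one_add_mul {κ : ℝ} (hκ : 0 ≤ κ) :
    MonotoneOn (fun x : ℝ => x / (1 + κ * x)) (Ici 0) := by
  intro x (hx : 0 ≤ x) y (hy : 0 ≤ y) hxy
  dsimp only
  rw [div_le_div_iff₀ (by positivity) (by positivity)]
  nlinarith

theorem min_rpow_le_rpow_of_mem_Icc {x y v p : ℝ} (hx : 0 < x) (hv : v ∈ Icc x y) :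
    min (x ^ p) (y ^ p) ≤ v ^ p := by
  rcases le_total 0 p with hp | hp
  · exact (min_le_left _ _).trans (rpow_le_rpow hx.le hv.1 hp)
  · exact (min_le_right _ _).trans (rpow_le_rpow_of_nonpos (hx.trans_le hv.1) hv.2 hp)

theorem mul_sq_le_of_monotoneOn {g : ℝ → ℝ} {β C : ℝ} (hg : MonotoneOn g (Ici β))
    (hC : ∀ x ∈ Ici β, C ≤ g x) {x y : ℝ} (hx : x ∈ Ici β) (hy : y ∈ Ici β) :
    C * (x - y) ^ 2 ≤ (x - y) * (g x * (x - β) - g y * (y - β)) := by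
  wlog hxy : y ≤ x generalizing x y
  · convert this hy hx (le_of_not_ge hxy) using 1 <;> ring
  have hgxy : g y ≤ g x := hg hy hx hxy
  nlinarith [mul_nonneg (sub_nonneg.2 hxy) (mul_nonneg (sub_nonneg.2 hgxy) (sub_nonneg.2 hy.out)),
    mul_le_mul_of_nonneg_right (hC x hx) (sq_nonneg (x - y))]

theorem c0_pos : 0 < c0 := rpow_pos_of_pos (by positivity) _

theorem abs_sub_le_of_abs_da_le {g : ℝ × ℝ → ℝ} (hg : ContDiffOn ℝ 1 g IsoRegion) {K : ℝ}
    (hK : ∀ η ∈ IsoRegion, |da g η| ≤ K) {v x y : ℝ} (hv : 0 < v)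
    (hx : x ∈ Ioi (c0 * v ^ ((2 : ℝ) / 3))) (hy : y ∈ Ioi (c0 * v ^ ((2 : ℝ) / 3))) :
    |g (x, v) - g (y, v)| ≤ K * |x - y| := by
  have hs : ContDiffOn ℝ 1 (fun x => g (x, v)) (Ici (c0 * v ^ ((2 : ℝ) / 3))) :=
    hg.comp (contDiffOn_id.prodMk contDiffOn_const) fun x hx => ⟨hv, hx⟩
  have hd (z : ℝ) (hz : z ∈ Ioi (c0 * v ^ ((2 : ℝ) / 3))) :
      DifferentiableAt ℝ (fun x => g (x, v)) z :=
    (hs.contDiffAt (Ici_mem_nhds hz)).differentiableAt one_ne_zero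
  simpa [Real.norm_eq_abs] using (convex_Ioi _).norm_image_sub_le_of_norm_deriv_le hd
    (fun z hz => hK (z, v) ⟨hv, hz.out.le⟩) hy hx

noncomputable def charSpeed (r : ℝ × ℝ → ℝ) (mu ε v a : ℝ) : ℝ :=
  ε⁻¹ * rbarFn r mu ε (a, v) * (c0 * v ^ ((2 : ℝ) / 3) - a)

theorem charSpeed_self (r : ℝ × ℝ → ℝ) (mu ε v : ℝ) :
    charSpeed r mu ε v (c0 * v ^ ((2 : ℝ) / 3)) = 0 := by
  simp [charSpeed]

namespace IsFusionKernel

variable {r : ℝ × ℝ → ℝ} {R₀ R₁ mu sg B : ℝ}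

theorem hasDerivAt_da (hr : IsFusionKernel r R₀ R₁ mu sg B) {a v : ℝ} (ha : 0 < a)
    (hv : 0 < v) : HasDerivAt (fun x => r (x, v)) (da r (a, v)) a := by
  have hQuad : Quad ∈ 𝓝 (a, v) := prod_mem_nhds (Ioi_mem_nhds ha) (Ioi_mem_nhds hv)
  exact (((hr.smooth.contDiffAt hQuad).differentiableAt one_ne_zero).comp a
    (differentiableAt_id.prodMk (differentiableAt_const v))).hasDerivAt

theorem monotoneOn_div_rpow (hr : IsFusionKernel r R₀ R₁ mu sg B) (hmu : 0 < mu) {v : ℝ}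
    (hv : 0 < v) : MonotoneOn (fun a => r (a, v) / a ^ mu) (Ici (c0 * v ^ ((2 : ℝ) / 3))) := by
  have hβ : 0 < c0 * v ^ ((2 : ℝ) / 3) := mul_pos c0_pos (rpow_pos_of_pos hv _)
  have hderiv (a : ℝ) (ha : 0 < a) : HasDerivAt (fun a => r (a, v) / a ^ mu)
      ((da r (a, v) * a ^ mu - r (a, v) * (mu * a ^ (mu - 1))) / (a ^ mu) ^ 2) a :=
    (hr.hasDerivAt_da ha hv).div (hasDerivAt_rpow_const (Or.inl ha.ne'))
      (rpow_pos_of_pos ha _).ne'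
  refine monotoneOn_of_hasDerivWithinAt_nonneg (convex_Ici _)
    (fun a ha => (hderiv a (hβ.trans_le ha)).continuousAt.continuousWithinAt)
    (fun a ha => (hderiv a ?_).hasDerivWithinAt) fun a ha => ?_ <;> rw [interior_Ici] at ha
  · exact hβ.trans ha
  have ha0 : 0 < a := hβ.trans ha
  have hcond := hr.cond_pos hmu (a, v) ⟨hv, ha.out.le⟩
  rw [rpow_sub_one ha0.ne']
  refine div_nonneg ?_ (by positivity)
  have hnum : da r (a, v) * a ^ mu - r (a, v) * (mu * (a ^ mu / a)) =
      a ^ mu * (da r (a, v) - mu * a⁻¹ * r (a, v)) := by ring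
  rw [hnum]
  exact mul_nonneg (rpow_nonneg ha0.le _) hcond

/-- `r̄_ε = (r / a^μ) · (a^μ / (1 + ε^{2μ+2} a^μ))` is a product of two nondecreasing factors. -/
theorem monotoneOn_rbarFn (hr : IsFusionKernel r R₀ R₁ mu sg B) (hmu : 0 < mu) {ε v : ℝ}
    (hε : 0 ≤ ε) (hv : 0 < v) :
    MonotoneOn (fun a => rbarFn r mu ε (a, v)) (Ici (c0 * v ^ ((2 : ℝ) / 3))) := by
  have hβ : 0 < c0 * v ^ ((2 : ℝ) / 3) := mul_pos c0_pos (rpow_pos_of_pos hv _)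
  have hE : 0 ≤ ε ^ (2 * mu + 2) := rpow_nonneg hε _
  have hpow : MonotoneOn (fun a : ℝ => a ^ mu) (Ici (c0 * v ^ ((2 : ℝ) / 3))) :=
    fun a ha b _ hab => rpow_le_rpow (hβ.trans_le ha).le hab hmu.le
  refine ((hr.monotoneOn_div_rpow hmu hv).mul ((monotoneOn_div_one_add_mul hE).comp hpow
    fun a ha => rpow_nonneg (hβ.trans_le ha).le _) (fun a ha => ?_) fun a ha => ?_).congr
    fun a ha => ?_
  · have ha0 := hβ.trans_le ha
    exact div_nonneg (hr.pos _ ⟨ha0, hv⟩).le (rpow_nonneg ha0.le _)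
  · have := rpow_nonneg (hβ.trans_le ha).le mu
    dsimp only [Function.comp]
    positivity
  · have := (rpow_pos_of_pos (hβ.trans_le ha) mu).ne'
    simp only [rbarFn, Pi.mul_apply, Function.comp]
    field_simp

theorem exists_pos_forall_le_rbarFn (hr : IsFusionKernel r R₀ R₁ mu sg B) (hmu : 0 < mu)
    {R : ℝ} (hR : 0 < R) : ∃ C > 0, ∀ ε ∈ Icc (0 : ℝ) 1, ∀ v ∈ Icc (1 / R) R,
      ∀ a ∈ Ici (c0 * v ^ ((2 : ℝ) / 3)), C ≤ rbarFn r mu ε (a, v) := by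
  set α := c0 * (1 / R) ^ ((2 : ℝ) / 3)
  have hα : 0 < α := mul_pos c0_pos (rpow_pos_of_pos (one_div_pos.2 hR) _)
  have hR₀ := hr.R0_pos
  refine ⟨R₀ * min ((1 / R) ^ sg) (R ^ sg) * (α ^ mu / (1 + α ^ mu)), ?_, ?_⟩
  · have : 0 < min ((1 / R) ^ sg) (R ^ sg) :=
      lt_min (rpow_pos_of_pos (one_div_pos.2 hR) _) (rpow_pos_of_pos hR _)
    positivity
  rintro ε ⟨hε0, hε1⟩ v hv a (ha : _ ≤ a)
  have hv0 : 0 < v := (one_div_pos.2 hR).trans_le hv.1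
  have hαa : α ≤ a := (mul_le_mul_of_nonneg_left
    (rpow_le_rpow (one_div_pos.2 hR).le hv.1 (by norm_num)) c0_pos.le).trans ha
  have ha0 : 0 < a := hα.trans_le hαa
  have hE : ε ^ (2 * mu + 2) ≤ 1 := rpow_le_one hε0 hε1 (by linarith)
  have hE0 : 0 ≤ ε ^ (2 * mu + 2) := rpow_nonneg hε0 _
  have hq : α ^ mu / (1 + α ^ mu) ≤ a ^ mu / (1 + a ^ mu) := by
    simpa using monotoneOn_div_one_add_mul zero_le_one (rpow_nonneg hα.le mu)
      (rpow_nonneg ha0.le mu) (rpow_le_rpow hα.le hαa hmu.le)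
  calc R₀ * min ((1 / R) ^ sg) (R ^ sg) * (α ^ mu / (1 + α ^ mu))
      ≤ R₀ * v ^ sg * (a ^ mu / (1 + a ^ mu)) := by
        gcongr R₀ * ?_ * ?_
        exact min_rpow_le_rpow_of_mem_Icc (one_div_pos.2 hR) hv
    _ ≤ R₀ * v ^ sg * (a ^ mu / (1 + ε ^ (2 * mu + 2) * a ^ mu)) := by
        have := rpow_nonneg ha0.le mu
        gcongr
        nlinarith
    _ = R₀ * a ^ mu * v ^ sg / (1 + ε ^ (2 * mu + 2) * a ^ mu) := by ring
    _ ≤ rbarFn r mu ε (a, v) := by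
        have := rpow_nonneg ha0.le mu
        exact div_le_div_of_nonneg_right (hr.lower (a, v) ⟨ha0, hv0⟩) (by positivity)

theorem charSpeed_nonpos (hr : IsFusionKernel r R₀ R₁ mu sg B) {ε v a : ℝ} (hε : 0 ≤ ε)
    (hv : 0 < v) (ha : a ∈ Ici (c0 * v ^ ((2 : ℝ) / 3))) : charSpeed r mu ε v a ≤ 0 := by
  have ha0 : 0 < a := (mul_pos c0_pos (rpow_pos_of_pos hv _)).trans_le ha
  have hrbar : 0 ≤ rbarFn r mu ε (a, v) := by
    have := (hr.pos (a, v) ⟨ha0, hv⟩).le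
    unfold rbarFn
    positivity
  exact mul_nonpos_of_nonneg_of_nonpos (by positivity) (sub_nonpos.2 ha)

theorem contDiffOn_charSpeed (hr : IsFusionKernel r R₀ R₁ mu sg B) {ε v : ℝ} (hε : 0 ≤ ε)
    (hv : 0 < v) : ContDiffOn ℝ 1 (charSpeed r mu ε v) (Ioi 0) := by
  have hr' : ContDiffOn ℝ 1 (fun a => r (a, v)) (Ioi 0) :=
    hr.smooth.comp (contDiffOn_id.prodMk contDiffOn_const) fun a ha => ⟨ha, hv⟩
  have hpow : ContDiffOn ℝ 1 (fun a : ℝ => a ^ mu) (Ioi 0) :=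
    contDiffOn_id.rpow_const_of_ne fun a ha => ha.out.ne'
  exact (contDiffOn_const.mul (hr'.div (contDiffOn_const.add (contDiffOn_const.mul hpow))
    fun a (ha : 0 < a) => by positivity)).mul (contDiffOn_const.sub contDiffOn_id)

theorem sub_mul_charSpeed_sub_le (hr : IsFusionKernel r R₀ R₁ mu sg B) (hmu : 0 < mu)
    {ε v C : ℝ} (hε : 0 ≤ ε) (hv : 0 < v)
    (hC : ∀ a ∈ Ici (c0 * v ^ ((2 : ℝ) / 3)), C ≤ rbarFn r mu ε (a, v))
    {x y : ℝ} (hx : x ∈ Ici (c0 * v ^ ((2 : ℝ) / 3))) (hy : y ∈ Ici (c0 * v ^ ((2 : ℝ) / 3))) :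
    (x - y) * (charSpeed r mu ε v x - charSpeed r mu ε v y) ≤ -(C / ε) * (x - y) ^ 2 := by
  have h := mul_sq_le_of_monotoneOn (hr.monotoneOn_rbarFn hmu hε hv) hC hx hy
  unfold charSpeed
  calc _ = -ε⁻¹ * ((x - y) * (rbarFn r mu ε (x, v) * (x - c0 * v ^ ((2 : ℝ) / 3)) -
        rbarFn r mu ε (y, v) * (y - c0 * v ^ ((2 : ℝ) / 3)))) := by ring
    _ ≤ -ε⁻¹ * (C * (x - y) ^ 2) :=
        mul_le_mul_of_nonpos_left h (neg_nonpos.2 (inv_nonneg.2 hε))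
    _ = -(C / ε) * (x - y) ^ 2 := by ring

theorem abs_da_le_exp_of_dual_transport (hr : IsFusionKernel r R₀ R₁ mu sg B) (hmu : 0 < mu)
    {ε v T C : ℝ} (hε : 0 ≤ ε) (hv : 0 < v)
    (hC : ∀ a ∈ Ici (c0 * v ^ ((2 : ℝ) / 3)), C ≤ rbarFn r mu ε (a, v))
    {φ : ℝ → ℝ × ℝ → ℝ}
    (hφ : ContDiffOn ℝ 1 (fun q : ℝ × (ℝ × ℝ) => φ q.1 q.2) (Icc 0 T ×ˢ IsoRegion))
    (hpde : ∀ t ∈ Icc (0 : ℝ) T, ∀ η ∈ IsoRegion, deriv (fun u => φ u η) t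
      + ε⁻¹ * rbarFn r mu ε η * (c0 * η.2 ^ ((2 : ℝ) / 3) - η.1) * da (φ t) η = 0)
    (hT : ∀ x ∈ Ioi (c0 * v ^ ((2 : ℝ) / 3)), ∀ y ∈ Ioi (c0 * v ^ ((2 : ℝ) / 3)),
      |φ T (x, v) - φ T (y, v)| ≤ |x - y|)
    {t a : ℝ} (ht : t ∈ Icc 0 T) (ha : a ∈ Ici (c0 * v ^ ((2 : ℝ) / 3))) :
    |da (φ t) (a, v)| ≤ exp (-(C * (T - t)) / ε) := by
  set f : ℝ × ℝ → ℝ := fun p => φ p.1 (p.2, v)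
  have hf : ContDiffOn ℝ 1 f (Icc 0 T ×ˢ Ici (c0 * v ^ ((2 : ℝ) / 3))) :=
    hφ.comp (contDiff_fst.prodMk (contDiff_snd.prodMk contDiff_const)).contDiffOn
      fun p hp => ⟨hp.1, hv, hp.2⟩
  have hF : ContDiffOn ℝ 1 (charSpeed r mu ε v) (Ici (c0 * v ^ ((2 : ℝ) / 3))) :=
    (hr.contDiffOn_charSpeed hε hv).mono fun x hx =>
      (mul_pos c0_pos (rpow_pos_of_pos hv _)).trans_le hx
  have hlip (x : ℝ) (hx : x ∈ Ioi (c0 * v ^ ((2 : ℝ) / 3))) (y : ℝ)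
      (hy : y ∈ Ioi (c0 * v ^ ((2 : ℝ) / 3))) :
      |f (t, x) - f (t, y)| ≤ exp (-(C / ε * (T - t))) * |x - y| :=
    abs_sub_le_exp_mul_of_transport hF (charSpeed_self r mu ε v)
      (fun x hx => hr.charSpeed_nonpos hε hv hx)
      (fun x hx y hy => hr.sub_mul_charSpeed_sub_le hmu hε hv hC hx hy) hf
      (fun s hs x hx => hpde s (Ioo_subset_Icc_self hs) (x, v) ⟨hv, hx.out.le⟩) hT ht hx hy
  have hslice : ContinuousOn (fun x => f (t, x)) (Ici (c0 * v ^ ((2 : ℝ) / 3))) :=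
    hf.continuousOn.comp (continuousOn_const.prodMk continuousOn_id) fun x hx => ⟨ht, hx⟩
  rw [show -(C * (T - t)) / ε = -(C / ε * (T - t)) by ring]
  exact abs_deriv_le_of_abs_sub_le (exp_pos _).le fun x hx =>
    abs_sub_le_of_continuousOn_Ici hslice hlip x (ha.out.trans hx) a ha

end IsFusionKernel

theorem dual_transport_derivative_decay_general
    (mu sg R₀ R₁ B : ℝ) (hmu : 0 < mu)
    (R T : ℝ) (hR : 1 < R)
    (r : ℝ × ℝ → ℝ) (hr : IsFusionKernel r R₀ R₁ mu sg B)
    (χ : ℝ × ℝ → ℝ)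
    (hχ_smooth : ContDiffOn ℝ 1 χ IsoRegion)
    -- ‖χ‖_∞ + ‖∂_a χ‖_∞ ≤ 1
    (hχ_norm : ∃ M₁ M₂ : ℝ, M₁ + M₂ ≤ 1 ∧ (∀ η ∈ IsoRegion, |χ η| ≤ M₁) ∧
      (∀ η ∈ IsoRegion, |da χ η| ≤ M₂))
    -- φ ε is, for each ε ∈ (0,1), the solution of the dual transport equation
    (φ : ℝ → ℝ → ℝ × ℝ → ℝ)
    (hφ_smooth : ∀ ε ∈ Ioo (0 : ℝ) 1,
      ContDiffOn ℝ 1 (fun q : ℝ × (ℝ × ℝ) => φ ε q.1 q.2)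
        (Icc (0 : ℝ) T ×ˢ IsoRegion))
    (hφ_v : ∀ ε ∈ Ioo (0 : ℝ) 1, ∀ t ∈ Icc (0 : ℝ) T,
      ∀ η : ℝ × ℝ, η.2 ∉ Icc (1 / R) R → φ ε t η = 0)
    (hφ_term : ∀ ε ∈ Ioo (0 : ℝ) 1, ∀ η ∈ IsoRegion, φ ε T η = χ η)
    (hφ_pde : ∀ ε ∈ Ioo (0 : ℝ) 1, ∀ t ∈ Icc (0 : ℝ) T, ∀ η ∈ IsoRegion,
      deriv (fun u => φ ε u η) t
        + ε⁻¹ * rbarFn r mu ε η * (c0 * η.2 ^ ((2 : ℝ) / 3) - η.1)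
          * da (φ ε t) η = 0) :
    ∃ ε₀ ∈ Ioo (0 : ℝ) 1, ∃ C > (0 : ℝ),
      ∀ ε ∈ Ioo (0 : ℝ) 1, ε ≤ ε₀ →
        ∀ t ∈ Icc (0 : ℝ) T, ∀ η ∈ IsoRegion,
          |da (φ ε t) η| ≤ Real.exp (-(C * (T - t)) / ε) := by
  obtain ⟨M₁, M₂, hM, hM₁, hM₂⟩ := hχ_norm
  have hM₂1 : M₂ ≤ 1 := by
    have hη : (c0, (1 : ℝ)) ∈ IsoRegion := ⟨one_pos, by simp⟩
    linarith [(abs_nonneg _).trans (hM₁ _ hη)]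
  obtain ⟨C, hC, hCr⟩ := hr.exists_pos_forall_le_rbarFn hmu (zero_lt_one.trans hR)
  refine ⟨1 / 2, by norm_num, C, hC, fun ε hε _ t ht ⟨a, v⟩ hη => ?_⟩
  by_cases hv : v ∈ Icc (1 / R) R
  · refine hr.abs_da_le_exp_of_dual_transport hmu hε.1.le hη.1 (hCr ε ⟨hε.1.le, hε.2.le⟩ v hv)
      (hφ_smooth ε hε) (hφ_pde ε hε) (fun x hx y hy => ?_) ht hη.2
    rw [hφ_term ε hε (x, v) ⟨hη.1, hx.out.le⟩, hφ_term ε hε (y, v) ⟨hη.1, hy.out.le⟩]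
    exact (abs_sub_le_of_abs_da_le hχ_smooth hM₂ hη.1 hx hy).trans
      (mul_le_of_le_one_left (abs_nonneg _) hM₂1)
  · have hslice : (fun x => φ ε t (x, v)) = fun _ => 0 :=
      funext fun x => hφ_v ε hε t ht (x, v) hv
    simp only [da, hslice, deriv_const, abs_zero]
    positivity

/-- exponential decay of the a-derivative of the dual transport solution:
`‖∂_a φ_ε(t)‖_∞ ≤ exp(−C(T−t)/ε)` for all small ε, with C independent of ε. -/
theorem dual_transport_derivative_decay
    (mu sg R₀ R₁ B : ℝ) (hmu : 0 < mu)
    (R T : ℝ) (hR : 1 < R) (hT : 0 < T)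
    (r : ℝ × ℝ → ℝ) (hr : IsFusionKernel r R₀ R₁ mu sg B)
    (δ₁ : ℝ) (hδ₁ : 0 < δ₁)
    (χ : ℝ × ℝ → ℝ)
    (hχ_smooth : ContDiffOn ℝ 1 χ IsoRegion)
    (hχ_v : ∀ η : ℝ × ℝ, η.2 ∉ Icc (1 / R) R → χ η = 0)
    (hχ_iso : ∀ η : ℝ × ℝ, η.1 ≤ c0 * η.2 ^ ((2 : ℝ) / 3) + δ₁ → χ η = 0)
    -- ‖χ‖_∞ + ‖∂_a χ‖_∞ ≤ 1
    (hχ_norm : ∃ M₁ M₂ : ℝ, M₁ + M₂ ≤ 1 ∧ (∀ η ∈ IsoRegion, |χ η| ≤ M₁) ∧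
      (∀ η ∈ IsoRegion, |da χ η| ≤ M₂))
    -- φ ε is, for each ε ∈ (0,1), the solution of the dual transport equation
    (φ : ℝ → ℝ → ℝ × ℝ → ℝ)
    (hφ_smooth : ∀ ε ∈ Ioo (0 : ℝ) 1,
      ContDiffOn ℝ 1 (fun q : ℝ × (ℝ × ℝ) => φ ε q.1 q.2)
        (Icc (0 : ℝ) T ×ˢ IsoRegion))
    (hφ_bdd : ∀ ε ∈ Ioo (0 : ℝ) 1,
      ∃ M : ℝ, ∀ t ∈ Icc (0 : ℝ) T, ∀ η ∈ IsoRegion, |φ ε t η| + |da (φ ε t) η| ≤ M)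
    (hφ_v : ∀ ε ∈ Ioo (0 : ℝ) 1, ∀ t ∈ Icc (0 : ℝ) T,
      ∀ η : ℝ × ℝ, η.2 ∉ Icc (1 / R) R → φ ε t η = 0)
    (hφ_term : ∀ ε ∈ Ioo (0 : ℝ) 1, ∀ η ∈ IsoRegion, φ ε T η = χ η)
    (hφ_pde : ∀ ε ∈ Ioo (0 : ℝ) 1, ∀ t ∈ Icc (0 : ℝ) T, ∀ η ∈ IsoRegion,
      deriv (fun u => φ ε u η) t
        + ε⁻¹ * rbarFn r mu ε η * (c0 * η.2 ^ ((2 : ℝ) / 3) - η.1)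
          * da (φ ε t) η = 0) :
    ∃ ε₀ ∈ Ioo (0 : ℝ) 1, ∃ C > (0 : ℝ),
      ∀ ε ∈ Ioo (0 : ℝ) 1, ε ≤ ε₀ →
        ∀ t ∈ Icc (0 : ℝ) T, ∀ η ∈ IsoRegion,
          |da (φ ε t) η| ≤ Real.exp (-(C * (T - t)) / ε) :=
  dual_transport_derivative_decay_general mu sg R₀ R₁ B hmu R T hR r hr χ hχ_smooth hχ_norm φ
    hφ_smooth hφ_v hφ_term hφ_pde
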